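/- Let Y ∈ ℝ^{n×d}, x* ∈ ℝ^n, β > 0, and m ≥ 1. Then the weight-decay primal optimal value inf over u_1,…,u_m ∈ ℝ^d and v_1,…,v_m ∈ ℝ of (1/2)‖Σ_{j=1}^m (Y u_j)_+ v_j − x*‖_2² + (β/2) Σ_{j=1}^m (‖u_j‖_2² + |v_j|²) is equal to the rescaled optimal value inf over u_1,…,u_m ∈ ℝ^d with ‖u_j‖_2 ≤ 1 for all j and v_1,…,v_m ∈ ℝ of (1/2)‖Σ_{j=1}^m (Y u_j)_+ v_j − x*‖_2² + β Σ_{j=1}^m |v_j|. -/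

import Mathlib

open Matrix Finset

noncomputable section

/-- Euclidean (ℓ2) norm of a vector in ℝ^k. -/
def l2 {k : ℕ} (x : Fin k → ℝ) : ℝ := Real.sqrt (∑ i, (x i) ^ 2)

/-- Componentwise ReLU. -/
def relu {k : ℕ} (x : Fin k → ℝ) : Fin k → ℝ := fun i => max (x i) 0

/-- The set of ReLU sign-pattern matrices of `Y`: diagonal 0/1 matrices
`Diag(1_{Yu ≥ 0})` as `u` ranges over the closed unit ball. -/
def signPatterns {n d : ℕ} (Y : Matrix (Fin n) (Fin d) ℝ) :
    Set (Matrix (Fin n) (Fin n) ℝ) :=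
  { M | ∃ u : Fin d → ℝ, l2 u ≤ 1 ∧
      M = Matrix.diagonal (fun i => if 0 ≤ Y.mulVec u i then (1 : ℝ) else 0) }

/-- Primal (non-convex) training objective with `m` neurons. -/
def primalObj {n d : ℕ} (Y : Matrix (Fin n) (Fin d) ℝ) (xs : Fin n → ℝ) (β : ℝ)
    (m : ℕ) (u : Fin m → Fin d → ℝ) (v : Fin m → ℝ) : ℝ :=
  (1 / 2) * l2 ((∑ j, v j • relu (Y.mulVec (u j))) - xs) ^ 2
    + (β / 2) * ∑ j, (l2 (u j) ^ 2 + |v j| ^ 2)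

/-- Optimal value of the primal training problem with `m` neurons. -/
def pStar {n d : ℕ} (Y : Matrix (Fin n) (Fin d) ℝ) (xs : Fin n → ℝ) (β : ℝ)
    (m : ℕ) : ℝ :=
  sInf { c | ∃ u : Fin m → Fin d → ℝ, ∃ v : Fin m → ℝ, c = primalObj Y xs β m u v }

/-- Dual feasibility: `(2 Dᵢ − I) Y wᵢ ≥ 0` componentwise for every `i`. -/
def dualFeasible {n d ℓ : ℕ} (Y : Matrix (Fin n) (Fin d) ℝ)
    (D : Fin ℓ → Matrix (Fin n) (Fin n) ℝ) (w : Fin ℓ → Fin d → ℝ) : Prop :=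
  ∀ i j, 0 ≤ ((2 • D i - 1).mulVec (Y.mulVec (w i))) j

/-- Convex dual objective. -/
def dualObj {n d ℓ : ℕ} (Y : Matrix (Fin n) (Fin d) ℝ) (xs : Fin n → ℝ) (β : ℝ)
    (D : Fin ℓ → Matrix (Fin n) (Fin n) ℝ) (w z : Fin ℓ → Fin d → ℝ) : ℝ :=
  (1 / 2) * l2 ((∑ i, (D i).mulVec (Y.mulVec (w i - z i))) - xs) ^ 2
    + β * ∑ i, (l2 (w i) + l2 (z i))

/-- Optimal value of the convex dual program. -/
def dStar {n d ℓ : ℕ} (Y : Matrix (Fin n) (Fin d) ℝ) (xs : Fin n → ℝ) (β : ℝ)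
    (D : Fin ℓ → Matrix (Fin n) (Fin n) ℝ) : ℝ :=
  sInf { c | ∃ w z : Fin ℓ → Fin d → ℝ,
    dualFeasible Y D w ∧ dualFeasible Y D z ∧ c = dualObj Y xs β D w z }

end

/-!
Replacing a neuron `(u, v)` by `(t • u, v / t)` with `t > 0` leaves its output `v • (Y u)₊`
unchanged, by positive homogeneity of the ReLU. Normalizing `u` to the unit sphere
(`t = ‖u‖⁻¹`) turns the weight-decay penalty `(‖u‖² + v²) / 2` into `‖u‖ |v|`, which is at most
the former by AM–GM; conversely, for `‖u‖ ≤ 1` the balancing choice `t = √|v|` gives a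
weight-decay penalty `|v| (‖u‖² + 1) / 2 ≤ |v|`. So every value of either problem is dominated
by a value of the other, and the two infima coincide.
-/

lemma l2_eq_norm {k : ℕ} (x : Fin k → ℝ) : l2 x = ‖WithLp.toLp 2 x‖ := by
  simp [l2, EuclideanSpace.norm_eq]

lemma l2_smul {k : ℕ} (c : ℝ) (x : Fin k → ℝ) : l2 (c • x) = |c| * l2 x := by
  rw [l2_eq_norm, l2_eq_norm, WithLp.toLp_smul, norm_smul, Real.norm_eq_abs]

lemma l2_eq_zero {k : ℕ} {x : Fin k → ℝ} : l2 x = 0 ↔ x = 0 := by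
  simp [l2_eq_norm]

@[simp]
lemma l2_zero {k : ℕ} : l2 (0 : Fin k → ℝ) = 0 := l2_eq_zero.mpr rfl

lemma l2_nonneg {k : ℕ} (x : Fin k → ℝ) : 0 ≤ l2 x := by
  rw [l2_eq_norm]; exact norm_nonneg _

lemma relu_smul_of_nonneg {k : ℕ} {c : ℝ} (hc : 0 ≤ c) (x : Fin k → ℝ) :
    relu (c • x) = c • relu x := by
  funext i
  simp [relu, mul_max_of_nonneg _ _ hc]

@[simp]
lemma relu_zero {k : ℕ} : relu (0 : Fin k → ℝ) = 0 := by
  funext i; simp [relu]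

section Rescaling

variable {n d : ℕ} (Y : Matrix (Fin n) (Fin d) ℝ)

lemma smul_relu_mulVec_rescale (u : Fin d → ℝ) (v : ℝ) {t : ℝ} (ht : 0 < t) :
    (v / t) • relu (Y *ᵥ (t • u)) = v • relu (Y *ᵥ u) := by
  rw [mulVec_smul, relu_smul_of_nonneg ht.le, smul_smul, div_mul_cancel₀ v ht.ne']

lemma exists_rescale_weightDecay_le {u : Fin d → ℝ} (hu : l2 u ≤ 1) (v : ℝ) :
    ∃ (u' : Fin d → ℝ) (v' : ℝ), v' • relu (Y *ᵥ u') = v • relu (Y *ᵥ u) ∧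
      (l2 u' ^ 2 + |v'| ^ 2) / 2 ≤ |v| := by
  rcases eq_or_ne v 0 with rfl | hv0
  · exact ⟨0, 0, by simp, by simp⟩
  have hv : 0 < |v| := abs_pos.mpr hv0
  set t := Real.sqrt |v|
  have ht : 0 < t := Real.sqrt_pos.mpr hv
  have ht_sq : t ^ 2 = |v| := Real.sq_sqrt hv.le
  refine ⟨t • u, v / t, smul_relu_mulVec_rescale Y u v ht, ?_⟩
  have hu_sq : l2 u ^ 2 ≤ 1 := pow_le_one₀ (l2_nonneg u) hu
  have hv' : |v / t| ^ 2 = |v| := by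
    rw [sq_abs, div_pow, ht_sq, ← sq_abs, pow_two, mul_div_cancel_right₀ _ hv.ne']
  rw [l2_smul, abs_of_pos ht, mul_pow, ht_sq, hv']
  nlinarith

lemma exists_rescale_unitBall_le (u : Fin d → ℝ) (v : ℝ) :
    ∃ (u' : Fin d → ℝ) (v' : ℝ), l2 u' ≤ 1 ∧ v' • relu (Y *ᵥ u') = v • relu (Y *ᵥ u) ∧
      |v'| ≤ (l2 u ^ 2 + |v| ^ 2) / 2 := by
  rcases eq_or_ne u 0 with rfl | hu
  · exact ⟨0, 0, by simp, by simp, by simp; positivity⟩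
  have hr : 0 < l2 u := (l2_nonneg u).lt_of_ne' (l2_eq_zero.not.mpr hu)
  refine ⟨(l2 u)⁻¹ • u, v / (l2 u)⁻¹, ?_, smul_relu_mulVec_rescale Y u v (inv_pos.mpr hr), ?_⟩
  · rw [l2_smul, abs_of_pos (inv_pos.mpr hr), inv_mul_cancel₀ hr.ne']
  · rw [div_inv_eq_mul, abs_mul, abs_of_pos hr]
    nlinarith [two_mul_le_add_sq |v| (l2 u)]

noncomputable def unitBallObj (xs : Fin n → ℝ) (β : ℝ) (m : ℕ) (u : Fin m → Fin d → ℝ)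
    (v : Fin m → ℝ) : ℝ :=
  (1 / 2) * l2 ((∑ j, v j • relu (Y *ᵥ u j)) - xs) ^ 2 + β * ∑ j, |v j|

variable (xs : Fin n → ℝ) {β : ℝ} {m : ℕ}

lemma exists_primalObj_le_unitBallObj (hβ : 0 ≤ β) {u : Fin m → Fin d → ℝ}
    (hu : ∀ j, l2 (u j) ≤ 1) (v : Fin m → ℝ) :
    ∃ u' v', primalObj Y xs β m u' v' ≤ unitBallObj Y xs β m u v := by
  choose u' v' hout hpen using fun j => exists_rescale_weightDecay_le Y (hu j) (v j)
  have hnet : ∑ j, v' j • relu (Y *ᵥ u' j) = ∑ j, v j • relu (Y *ᵥ u j) :=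
    sum_congr rfl fun j _ => hout j
  have hpen : β / 2 * ∑ j, (l2 (u' j) ^ 2 + |v' j| ^ 2) ≤ β * ∑ j, |v j| := by
    rw [mul_sum, mul_sum]
    exact sum_le_sum fun j _ => by linarith [mul_le_mul_of_nonneg_left (hpen j) hβ]
  refine ⟨u', v', ?_⟩
  rw [primalObj, unitBallObj, hnet]
  linarith

lemma exists_unitBallObj_le_primalObj (hβ : 0 ≤ β) (u : Fin m → Fin d → ℝ) (v : Fin m → ℝ) :
    ∃ u' v', (∀ j, l2 (u' j) ≤ 1) ∧ unitBallObj Y xs β m u' v' ≤ primalObj Y xs β m u v := by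
  choose u' v' hu' hout hpen using fun j => exists_rescale_unitBall_le Y (u j) (v j)
  have hnet : ∑ j, v' j • relu (Y *ᵥ u' j) = ∑ j, v j • relu (Y *ᵥ u j) :=
    sum_congr rfl fun j _ => hout j
  have hpen : β * ∑ j, |v' j| ≤ β / 2 * ∑ j, (l2 (u j) ^ 2 + |v j| ^ 2) := by
    rw [mul_sum, mul_sum]
    exact sum_le_sum fun j _ => by linarith [mul_le_mul_of_nonneg_left (hpen j) hβ]
  refine ⟨u', v', hu', ?_⟩
  rw [primalObj, unitBallObj, hnet]
  linarith

end Rescaling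

theorem rescaling_equivalence_general {n d : ℕ} (Y : Matrix (Fin n) (Fin d) ℝ)
    (xs : Fin n → ℝ) (β : ℝ) (hβ : 0 < β) (m : ℕ) :
    pStar Y xs β m =
      sInf { c | ∃ u : Fin m → Fin d → ℝ, ∃ v : Fin m → ℝ,
        (∀ j, l2 (u j) ≤ 1) ∧
        c = (1 / 2) * l2 ((∑ j, v j • relu (Y.mulVec (u j))) - xs) ^ 2
            + β * ∑ j, |v j| } := by
  refine csInf_eq_csInf_of_forall_exists_le ?_ ?_
  · rintro _ ⟨u, v, rfl⟩
    obtain ⟨u', v', hu', hle⟩ := exists_unitBallObj_le_primalObj Y xs hβ.le u v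
    exact ⟨_, ⟨u', v', hu', rfl⟩, hle⟩
  · rintro _ ⟨u, v, hu, rfl⟩
    obtain ⟨u', v', hle⟩ := exists_primalObj_le_unitBallObj Y xs hβ.le hu v
    exact ⟨_, ⟨u', v', rfl⟩, hle⟩

/-- **Rescaling equivalence.** Weight decay on both layers is
equivalent to constraining first-layer weights to the unit ball and penalizing
the ℓ1 norm of the second-layer weights. -/
theorem rescaling_equivalence {n d : ℕ} (Y : Matrix (Fin n) (Fin d) ℝ)
    (xs : Fin n → ℝ) (β : ℝ) (hβ : 0 < β) (m : ℕ) (hm : 1 ≤ m) :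
    pStar Y xs β m =
      sInf { c | ∃ u : Fin m → Fin d → ℝ, ∃ v : Fin m → ℝ,
        (∀ j, l2 (u j) ≤ 1) ∧
        c = (1 / 2) * l2 ((∑ j, v j • relu (Y.mulVec (u j))) - xs) ^ 2
            + β * ∑ j, |v j| } :=
  rescaling_equivalence_general Y xs β hβ m
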